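/- For CRRA utility u with σ > 0 and F > 0, the equation u(h) + u'(h)(F - h) = K has a unique solution h ∈ (0, F) for any K > u(F), since H(h) = u(h) + u'(h)(F - h) is strictly decreasing on (0,F), H(F) = u(F), and H(h) → ∞ as h → 0⁺. -/

import Mathlib

/-- CRRA instantaneous social welfare with coefficient σ. -/
noncomputable def crra (σ : ℝ) (h : ℝ) : ℝ :=
  if σ = 1 then Real.log h else h ^ (1 - σ) / (1 - σ)

open Real Filter Set

lemma hasDerivAt_crra (σ : ℝ) {x : ℝ} (hx : 0 < x) :
    HasDerivAt (crra σ) (x ^ (-σ)) x := by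
  by_cases h1 : σ = 1
  · subst h1
    have he : crra 1 = Real.log := by funext h; simp [crra]
    rw [he]
    simpa [Real.rpow_neg_one] using Real.hasDerivAt_log hx.ne'
  · have he : crra σ = fun h : ℝ => h ^ (1 - σ) / (1 - σ) := by
      funext h; simp [crra, h1]
    rw [he]
    have hne : (1 : ℝ) - σ ≠ 0 := sub_ne_zero.mpr (Ne.symm h1)
    have hd := (Real.hasDerivAt_rpow_const (p := 1 - σ) (Or.inl hx.ne')).div_const (1 - σ)
    refine hd.congr_deriv ?_
    have h2 : 1 - σ - 1 = -σ := by ring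
    rw [h2]
    field_simp

lemma hasDerivAt_H (σ F : ℝ) {x : ℝ} (hx : 0 < x) :
    HasDerivAt (fun h : ℝ => crra σ h + h ^ (-σ) * (F - h))
      (-(σ * x ^ (-σ - 1) * (F - x))) x := by
  have h1 := hasDerivAt_crra σ hx
  have h2 := Real.hasDerivAt_rpow_const (p := -σ) (x := x) (Or.inl hx.ne')
  have h3 : HasDerivAt (fun h : ℝ => F - h) (-1) x := (hasDerivAt_id x).const_sub F
  have h4 := h1.add (h2.mul h3)
  refine h4.congr_deriv ?_
  ring

/-- For CRRA utility with σ > 0 and F > 0, the transversality equation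
u(h) + u'(h)(F - h) = K has a unique solution h ∈ (0, F) for any K > u(F). -/
theorem stmt_5 (σ F K : ℝ) (hσ : 0 < σ) (hF : 0 < F) (hK : crra σ F < K) :
    ∃! h : ℝ, h ∈ Set.Ioo 0 F ∧ crra σ h + h ^ (-σ) * (F - h) = K := by
  set H : ℝ → ℝ := fun h => crra σ h + h ^ (-σ) * (F - h) with hH
  have hcont : ∀ x : ℝ, 0 < x → ContinuousAt H x := fun x hx =>
    (hasDerivAt_H σ F hx).continuousAt
  -- H is strictly decreasing on (0, F]
  have anti : StrictAntiOn H (Ioc 0 F) := by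
    apply strictAntiOn_of_deriv_neg (convex_Ioc 0 F)
    · exact fun x hx => (hcont x hx.1).continuousWithinAt
    · intro x hx
      rw [interior_Ioc] at hx
      rw [(hasDerivAt_H σ F hx.1).deriv]
      have h1 : 0 < x ^ (-σ - 1) := Real.rpow_pos_of_pos hx.1 _
      have h2 : 0 < F - x := sub_pos.mpr hx.2
      have : 0 < σ * x ^ (-σ - 1) * (F - x) := by positivity
      linarith
  -- H tends to ∞ as h → 0⁺
  have htend : Tendsto H (nhdsWithin 0 (Ioi 0)) atTop := by
    have t1 : Tendsto (fun h : ℝ => h ^ (-σ)) (nhdsWithin 0 (Ioi 0)) atTop := by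
      have := (tendsto_rpow_atTop hσ).comp tendsto_inv_nhdsGT_zero
      refine this.congr' ?_
      filter_upwards [eventually_mem_nhdsWithin] with h (hh : (0:ℝ) < h)
      simp only [Function.comp]
      rw [Real.inv_rpow hh.le, ← Real.rpow_neg hh.le]
    by_cases h1 : σ = 1
    · subst h1
      -- H h = F * h⁻¹ - log h⁻¹ - 1 for h > 0
      have key : Tendsto (fun y : ℝ => F * y - Real.log y - 1) atTop atTop := by
        have hd : Tendsto (fun y : ℝ => Real.log y / y) atTop (nhds 0) :=
          Real.isLittleO_log_id_atTop.tendsto_div_nhds_zero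
        have hg : Tendsto (fun y : ℝ => F - Real.log y / y) atTop (nhds F) := by
          simpa using tendsto_const_nhds.sub hd
        have hmul : Tendsto (fun y : ℝ => y * (F - Real.log y / y)) atTop atTop :=
          tendsto_id.atTop_mul_pos hF hg
        have hsub : Tendsto (fun y : ℝ => y * (F - Real.log y / y) + (-1)) atTop atTop :=
          tendsto_atTop_add_const_right _ _ hmul
        refine hsub.congr' ?_
        filter_upwards [eventually_gt_atTop (0:ℝ)] with y hy
        field_simp
        ring
      have := key.comp tendsto_inv_nhdsGT_zero
      refine this.congr' ?_
      filter_upwards [eventually_mem_nhdsWithin] with h (hh : (0:ℝ) < h)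
      simp only [Function.comp, hH, crra, if_pos rfl, eq_self_iff_true, if_true]
      rw [Real.log_inv, Real.rpow_neg_one]
      have hne : h ≠ 0 := hh.ne'
      field_simp
      ring
    · -- H h = h^(-σ) * (σ/(1-σ) * h + F) for h > 0
      have hne : (1 : ℝ) - σ ≠ 0 := sub_ne_zero.mpr (Ne.symm h1)
      have t2 : Tendsto (fun h : ℝ => σ / (1 - σ) * h + F) (nhdsWithin 0 (Ioi 0)) (nhds F) := by
        have : Tendsto (fun h : ℝ => σ / (1 - σ) * h + F) (nhds 0) (nhds F) := by
          have hc : Continuous (fun h : ℝ => σ / (1 - σ) * h + F) := by continuity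
          simpa using hc.tendsto 0
        exact this.mono_left nhdsWithin_le_nhds
      have hmul := t1.atTop_mul_pos hF t2
      refine hmul.congr' ?_
      filter_upwards [eventually_mem_nhdsWithin] with h (hh : (0:ℝ) < h)
      simp only [hH, crra, if_neg h1]
      have hpow : h ^ (1 - σ) = h ^ (-σ) * h := by
        rw [show (1 : ℝ) - σ = -σ + 1 by ring, Real.rpow_add hh, Real.rpow_one]
      rw [hpow]
      field_simp
      ring
  -- pick h₀ ∈ (0, F) with H h₀ > K
  have hev : ∀ᶠ h in nhdsWithin 0 (Ioi 0), K < H h ∧ h ∈ Ioo (0:ℝ) F :=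
    (htend.eventually_gt_atTop K).and
      (eventually_mem_nhdsWithin.and (eventually_nhdsWithin_of_eventually_nhds
        (Filter.Tendsto.eventually_lt_const hF Filter.tendsto_id)) |>.mono (fun x hx => ⟨hx.1, hx.2⟩))
  obtain ⟨h₀, hKh₀, hh₀⟩ := hev.exists
  have hHF : H F = crra σ F := by simp [hH]
  -- existence via IVT
  have hcontOn : ContinuousOn H (Icc h₀ F) := fun x hx =>
    (hcont x (lt_of_lt_of_le hh₀.1 hx.1)).continuousWithinAt
  have hivt := intermediate_value_Ioo' hh₀.2.le hcontOn
  have hKmem : K ∈ Ioo (H F) (H h₀) := ⟨by rwa [hHF], hKh₀⟩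
  obtain ⟨h, hmem, hEq⟩ := hivt hKmem
  refine ⟨h, ⟨⟨lt_trans hh₀.1 hmem.1, hmem.2⟩, hEq⟩, ?_⟩
  rintro y ⟨hy, hyEq⟩
  exact anti.injOn ⟨hy.1, hy.2.le⟩ ⟨lt_trans hh₀.1 hmem.1, hmem.2.le⟩ (show H y = H h by show crra σ y + y ^ (-σ) * (F - y) = H h; rw [hyEq, hEq])
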